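/- arXiv:2404.00347 — 5 statements merged into one kernel-verified Lean document; each statement's English description precedes it below -/
import Mathlib

section
/- For d ≥ 2 there exists a constant C_d > 0 such that for all J ∈ ℝ^d and all ω ∈ S^{d-1}, the von Mises distribution satisfies 0 < M_J(ω) ≤ C_d (1 + |J|^{(d-1)/2}). -/
open MeasureTheory Metric

/-- The surface measure on the unit sphere `S^{d-1} ⊂ ℝ^d`. -/
noncomputable def sphMeasure (d : ℕ) : Measure (sphere (0 : EuclideanSpace ℝ (Fin d)) 1) :=
  (volume : Measure (EuclideanSpace ℝ (Fin d))).toSphere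

/-- Normalization constant `Z(J) = ∫_{S^{d-1}} exp(ω·J) dω`. -/
noncomputable def vonMisesZ (d : ℕ) (J : EuclideanSpace ℝ (Fin d)) : ℝ :=
  ∫ ω : sphere (0 : EuclideanSpace ℝ (Fin d)) 1,
    Real.exp (inner ℝ (ω : EuclideanSpace ℝ (Fin d)) J) ∂(sphMeasure d)

/-- The von Mises density `M_J(ω) = exp(ω·J)/Z(J)`. -/
noncomputable def vonMises (d : ℕ) (J : EuclideanSpace ℝ (Fin d))
    (ω : sphere (0 : EuclideanSpace ℝ (Fin d)) 1) : ℝ :=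
  Real.exp (inner ℝ (ω : EuclideanSpace ℝ (Fin d)) J) / vonMisesZ d J

/-!
Since `⟪ω, J⟫ ≤ ‖J‖`, it suffices to bound `Z(J)` from below. For `‖J‖ ≤ 2` the trivial bound
`Z(J) ≥ e^{-‖J‖} |S^{d-1}|` does. For `‖J‖ ≥ 2` the integrand is at least `e^{‖J‖-1}` on the cap
`{ω | ⟪J/‖J‖, ω⟫ ≥ 1 - 1/‖J‖}`, whose measure is of order `‖J‖^{-(d-1)/2}`. To see the latter,
write the surface measure of a set as `d` times the volume of the cone `(0,1) • A`, and note that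
in an orthonormal basis starting with the cap's axis, the cone over a cap `⟪u, ω⟫ ≥ 1 - t`
contains the box `(1/2, 3/4) × (-√t/(2d), √t/(2d))^{d-1}`.
-/

open Set Module Real
open scoped RealInnerProductSpace Pointwise

local notation "dim" => Module.finrank ℝ

section SphericalCap

variable {E : Type*} [NormedAddCommGroup E] [InnerProductSpace ℝ E]

def sphericalCap (u : E) (c : ℝ) : Set (sphere (0 : E) 1) := {ω | c ≤ ⟪u, ω.1⟫}

lemma isClosed_sphericalCap (u : E) (c : ℝ) : IsClosed (sphericalCap u c) :=
  isClosed_le continuous_const (continuous_const.inner continuous_subtype_val)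

lemma mem_Ioo_smul_sphericalCap {u x : E} {t : ℝ} (hu : ‖u‖ = 1) (ht : t ≤ 1 / 2)
    (hux : ⟪u, x⟫ ∈ Ioo (1 / 2 : ℝ) (3 / 4)) (hx : ‖x‖ ^ 2 - ⟪u, x⟫ ^ 2 ≤ t / 2) :
    x ∈ Ioo (0 : ℝ) 1 • ((↑) '' sphericalCap u (1 - t)) := by
  obtain ⟨ha, ha'⟩ := hux
  have hle : ⟪u, x⟫ ≤ ‖x‖ := by simpa [hu] using real_inner_le_norm u x
  have hx0 : 0 < ‖x‖ := by linarith
  have hx1 : ‖x‖ < 1 := by nlinarith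
  have hgap : ‖x‖ - ⟪u, x⟫ ≤ t / 2 := by nlinarith
  have ht0 : 0 ≤ t := by nlinarith
  have hcap : (1 - t) * ‖x‖ ≤ ⟪u, x⟫ := by nlinarith
  refine ⟨‖x‖, ⟨hx0, hx1⟩, ‖x‖⁻¹ • x, ⟨⟨_, by simp [norm_smul, hx0.ne']⟩, ?_, rfl⟩, ?_⟩
  · change 1 - t ≤ ⟪u, ‖x‖⁻¹ • x⟫
    rwa [real_inner_smul_right, inv_mul_eq_div, le_div_iff₀ hx0]
  · simp [smul_smul, hx0.ne']

lemma OrthonormalBasis.norm_sq_sub_inner_sq_le {ι : Type*} [Fintype ι] [DecidableEq ι]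
    (b : OrthonormalBasis ι ℝ E) (i₀ : ι) {x : E} {s : ℝ} (hx : ∀ i ≠ i₀, |⟪b i, x⟫| ≤ s) :
    ‖x‖ ^ 2 - ⟪b i₀, x⟫ ^ 2 ≤ Fintype.card ι * s ^ 2 := by
  rw [← b.sum_sq_inner_right, ← Finset.add_sum_erase _ _ (Finset.mem_univ i₀),
    add_sub_cancel_left]
  calc ∑ i ∈ Finset.univ.erase i₀, ⟪b i, x⟫ ^ 2 ≤ ∑ i ∈ Finset.univ.erase i₀, s ^ 2 :=
        Finset.sum_le_sum fun i hi => sq_le_sq' (abs_le.1 (hx i (Finset.ne_of_mem_erase hi))).1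
          (abs_le.1 (hx i (Finset.ne_of_mem_erase hi))).2
    _ ≤ Fintype.card ι * s ^ 2 := by
        rw [Finset.sum_const, nsmul_eq_mul]
        gcongr
        exact_mod_cast Finset.card_le_univ _

variable [FiniteDimensional ℝ E]

lemma exists_orthonormalBasis_apply_eq {ι : Type*} [Fintype ι] (hι : dim E = Fintype.card ι)
    (i₀ : ι) {u : E} (hu : ‖u‖ = 1) : ∃ b : OrthonormalBasis ι ℝ E, b i₀ = u := by
  have hu' : Orthonormal ℝ (({i₀} : Set ι).domRestrict fun _ => u) :=
    ⟨fun _ => hu, fun i j hij => absurd (Subtype.ext (i.2.trans j.2.symm)) hij⟩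
  obtain ⟨b, hb⟩ := hu'.exists_orthonormalBasis_extension_of_card_eq hι
  exact ⟨b, hb i₀ rfl⟩

variable [MeasurableSpace E] [BorelSpace E]

lemma OrthonormalBasis.volume_setOf_repr_mem {ι : Type*} [Fintype ι]
    (b : OrthonormalBasis ι ℝ E) {I : ι → Set ℝ} (hI : ∀ i, MeasurableSet (I i)) :
    volume {x : E | ∀ i, b.repr x i ∈ I i} = ∏ i, volume (I i) := by
  have hpi : MeasurableSet (univ.pi I) := .univ_pi hI
  have hset : {x : E | ∀ i, b.repr x i ∈ I i} = b.repr ⁻¹' (WithLp.ofLp ⁻¹' univ.pi I) := by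
    ext; simp
  rw [hset, b.measurePreserving_repr.measure_preimage
      ((PiLp.volume_preserving_ofLp ι).measurable hpi).nullMeasurableSet,
    (PiLp.volume_preserving_ofLp ι).measure_preimage hpi.nullMeasurableSet, volume_pi_pi]

lemma toSphere_sphericalCap_ge {u : E} (hu : ‖u‖ = 1) {t : ℝ} (ht0 : 0 < t) (ht : t ≤ 1 / 2) :
    ENNReal.ofReal (dim E / (4 * dim E ^ (dim E - 1)) * √t ^ (dim E - 1))
      ≤ volume.toSphere (sphericalCap u (1 - t)) := by
  set n := dim E
  have hn : 0 < n := finrank_pos_iff_exists_ne_zero.2 ⟨u, norm_ne_zero_iff.1 (by simp [hu])⟩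
  set i₀ : Fin n := ⟨0, hn⟩
  obtain ⟨b, hb⟩ := exists_orthonormalBasis_apply_eq (by simp [n]) i₀ hu
  set s := √t / (2 * n) with hs
  set I : Fin n → Set ℝ := Function.update (fun _ => Ioo (-s) s) i₀ (Ioo (1 / 2) (3 / 4)) with hI
  set box := {x : E | ∀ i, b.repr x i ∈ I i}
  have hbox : box ⊆ Ioo (0 : ℝ) 1 • ((↑) '' sphericalCap u (1 - t)) := by
    intro x (hx : ∀ i, b.repr x i ∈ I i)
    simp only [b.repr_apply_apply] at hx
    refine mem_Ioo_smul_sphericalCap hu ht (by simpa [I, hb] using hx i₀) ?_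
    have hs : (n : ℝ) * s ^ 2 ≤ t / 2 := by
      have hn' : (1 : ℝ) ≤ n := by exact_mod_cast hn
      rw [div_pow, mul_pow, Real.sq_sqrt ht0.le]
      field_simp
      nlinarith
    refine (hb ▸ b.norm_sq_sub_inner_sq_le i₀ fun i hi => ?_).trans (by simpa using hs)
    have hxi := hx i
    simp only [I, Function.update_of_ne hi] at hxi
    exact abs_le.2 ⟨hxi.1.le, hxi.2.le⟩
  have hvol : volume box = ENNReal.ofReal (1 / 4 * (2 * s) ^ (n - 1)) := by
    rw [b.volume_setOf_repr_mem fun i => by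
      by_cases hi : i = i₀ <;> simp [I, hi, measurableSet_Ioo]]
    rw [← Finset.mul_prod_erase _ _ (Finset.mem_univ i₀), Finset.prod_congr rfl fun i hi => by
      rw [hI, Function.update_of_ne (Finset.ne_of_mem_erase hi)]]
    rw [hI, Function.update_self, Finset.prod_const, Finset.card_erase_of_mem (Finset.mem_univ _),
      Finset.card_univ, Fintype.card_fin, Real.volume_Ioo, Real.volume_Ioo, sub_neg_eq_add,
      ← two_mul, ← ENNReal.ofReal_pow (by positivity), ← ENNReal.ofReal_mul (by norm_num)]
    norm_num
  rw [Measure.toSphere_apply' _ (isClosed_sphericalCap u _).measurableSet]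
  calc _ = n * volume box := by
        rw [hvol, ← ENNReal.ofReal_natCast, ← ENNReal.ofReal_mul (by positivity)]
        congr 1
        field_simp
        rw [← mul_pow, hs]
        field_simp
    _ ≤ _ := by gcongr

end SphericalCap

lemma Real.sqrt_pow_eq_rpow {x : ℝ} (hx : 0 ≤ x) (k : ℕ) : √x ^ k = x ^ ((k : ℝ) / 2) := by
  rw [sqrt_eq_rpow, ← rpow_natCast, ← rpow_mul hx]
  ring_nf

section VonMises

variable {d : ℕ}

instance : IsFiniteMeasure (sphMeasure d) := by
  unfold sphMeasure; infer_instance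

lemma sphMeasure_real_univ_pos (hd : 0 < d) : 0 < (sphMeasure d).real univ := by
  rw [sphMeasure, Measure.toSphere_real_apply_univ, finrank_euclideanSpace_fin]
  exact mul_pos (by exact_mod_cast hd)
    (ENNReal.toReal_pos (measure_ball_pos _ _ one_pos).ne' measure_ball_lt_top.ne)

lemma abs_inner_le_norm_of_mem_sphere (ω : sphere (0 : EuclideanSpace ℝ (Fin d)) 1)
    (J : EuclideanSpace ℝ (Fin d)) : |⟪ω.1, J⟫| ≤ ‖J‖ := by
  simpa [norm_eq_of_mem_sphere ω] using abs_real_inner_le_norm ω.1 J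

lemma integrable_exp_inner (J : EuclideanSpace ℝ (Fin d)) :
    Integrable (fun ω : sphere (0 : EuclideanSpace ℝ (Fin d)) 1 => exp ⟪ω.1, J⟫) (sphMeasure d) :=
  (continuous_subtype_val.inner continuous_const).rexp.integrable_of_hasCompactSupport
    (.of_compactSpace _)

lemma exp_mul_measureReal_le_vonMisesZ (J : EuclideanSpace ℝ (Fin d))
    {A : Set (sphere (0 : EuclideanSpace ℝ (Fin d)) 1)} (hA : MeasurableSet A) {c : ℝ}
    (hc : ∀ ω ∈ A, c ≤ ⟪ω.1, J⟫) :
    exp c * (sphMeasure d).real A ≤ vonMisesZ d J :=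
  calc exp c * (sphMeasure d).real A ≤ ∫ ω in A, exp ⟪ω.1, J⟫ ∂sphMeasure d :=
        setIntegral_ge_of_const_le_real hA (measure_ne_top _ _)
          (fun ω hω => exp_le_exp.2 (hc ω hω)) (integrable_exp_inner J).integrableOn
    _ ≤ vonMisesZ d J :=
        setIntegral_le_integral (integrable_exp_inner J) (.of_forall fun _ => (exp_pos _).le)

lemma vonMisesZ_pos (hd : 0 < d) (J : EuclideanSpace ℝ (Fin d)) : 0 < vonMisesZ d J :=
  (mul_pos (exp_pos _) (sphMeasure_real_univ_pos hd)).trans_le <|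
    exp_mul_measureReal_le_vonMisesZ J .univ fun ω _ =>
      (abs_le.1 (abs_inner_le_norm_of_mem_sphere ω J)).1

lemma vonMises_pos (hd : 0 < d) (J : EuclideanSpace ℝ (Fin d))
    (ω : sphere (0 : EuclideanSpace ℝ (Fin d)) 1) : 0 < vonMises d J ω :=
  div_pos (exp_pos _) (vonMisesZ_pos hd J)

lemma vonMises_le_of_le_inner (J : EuclideanSpace ℝ (Fin d))
    (ω : sphere (0 : EuclideanSpace ℝ (Fin d)) 1)
    {A : Set (sphere (0 : EuclideanSpace ℝ (Fin d)) 1)} (hA : MeasurableSet A)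
    (hA0 : 0 < (sphMeasure d).real A) {c : ℝ} (hc : ∀ ω' ∈ A, c ≤ ⟪ω'.1, J⟫) :
    vonMises d J ω ≤ exp (‖J‖ - c) / (sphMeasure d).real A :=
  calc vonMises d J ω ≤ exp ‖J‖ / (exp c * (sphMeasure d).real A) :=
        div_le_div₀ (exp_pos _).le
          (exp_le_exp.2 (abs_le.1 (abs_inner_le_norm_of_mem_sphere ω J)).2)
          (by positivity) (exp_mul_measureReal_le_vonMisesZ J hA hc)
    _ = exp (‖J‖ - c) / (sphMeasure d).real A := by rw [exp_sub, div_div]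

lemma vonMises_le_exp_two_mul_norm (hd : 0 < d) (J : EuclideanSpace ℝ (Fin d))
    (ω : sphere (0 : EuclideanSpace ℝ (Fin d)) 1) :
    vonMises d J ω ≤ exp (2 * ‖J‖) / (sphMeasure d).real univ := by
  simpa [two_mul] using vonMises_le_of_le_inner J ω .univ (sphMeasure_real_univ_pos hd)
    fun ω' _ => (abs_le.1 (abs_inner_le_norm_of_mem_sphere ω' J)).1

lemma vonMises_le_of_two_le_norm (hd : 0 < d) (J : EuclideanSpace ℝ (Fin d))
    (ω : sphere (0 : EuclideanSpace ℝ (Fin d)) 1) (hJ : 2 ≤ ‖J‖) :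
    vonMises d J ω ≤ exp 1 / (d / (4 * d ^ (d - 1))) * ‖J‖ ^ (((d : ℝ) - 1) / 2) := by
  have hJ0 : 0 < ‖J‖ := by linarith
  set u := ‖J‖⁻¹ • J
  set A := sphericalCap u (1 - ‖J‖⁻¹)
  have hu : ‖u‖ = 1 := norm_smul_inv_norm (norm_pos_iff.1 hJ0)
  have hcap := toSphere_sphericalCap_ge hu (inv_pos.2 hJ0)
    (by rw [inv_le_comm₀ hJ0 (by norm_num)]; linarith)
  rw [finrank_euclideanSpace_fin, sqrt_pow_eq_rpow (inv_nonneg.2 hJ0.le), inv_rpow hJ0.le,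
    Nat.cast_sub hd, Nat.cast_one] at hcap
  have hA : d / (4 * d ^ (d - 1)) * (‖J‖ ^ (((d : ℝ) - 1) / 2))⁻¹ ≤ (sphMeasure d).real A :=
    (ENNReal.ofReal_le_iff_le_toReal (measure_ne_top _ _)).1 hcap
  have hinner : ∀ ω' ∈ A, ‖J‖ - 1 ≤ ⟪ω'.1, J⟫ := by
    intro ω' (hω' : 1 - ‖J‖⁻¹ ≤ ⟪u, ω'.1⟫)
    have hJω : ⟪ω'.1, J⟫ = ‖J‖ * ⟪u, ω'.1⟫ := by
      rw [real_inner_smul_left, ← mul_assoc, mul_inv_cancel₀ hJ0.ne', one_mul, real_inner_comm]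
    calc ‖J‖ - 1 = ‖J‖ * (1 - ‖J‖⁻¹) := by field_simp
      _ ≤ ⟪ω'.1, J⟫ := hJω ▸ mul_le_mul_of_nonneg_left hω' hJ0.le
  calc vonMises d J ω ≤ exp (‖J‖ - (‖J‖ - 1)) / (sphMeasure d).real A :=
        vonMises_le_of_le_inner J ω (isClosed_sphericalCap _ _).measurableSet
          (lt_of_lt_of_le (by positivity) hA) hinner
    _ ≤ exp 1 / (d / (4 * d ^ (d - 1)) * (‖J‖ ^ (((d : ℝ) - 1) / 2))⁻¹) := by
        rw [sub_sub_cancel]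
        gcongr
    _ = exp 1 / (d / (4 * d ^ (d - 1))) * ‖J‖ ^ (((d : ℝ) - 1) / 2) := by
        rw [div_mul_eq_div_div, div_inv_eq_mul]

end VonMises

/-- For `d ≥ 2` there is `C_d > 0` such that for all `J` and all `ω ∈ S^{d-1}`,
`0 < M_J(ω) ≤ C_d (1 + |J|^{(d-1)/2})`. -/
theorem vonMises_upper_bound (d : ℕ) (hd : 2 ≤ d) :
    ∃ C : ℝ, 0 < C ∧ ∀ (J : EuclideanSpace ℝ (Fin d))
      (ω : sphere (0 : EuclideanSpace ℝ (Fin d)) 1),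
      0 < vonMises d J ω ∧
      vonMises d J ω ≤ C * (1 + ‖J‖ ^ (((d : ℝ) - 1) / 2)) := by
  have hd0 : 0 < d := by omega
  set V := (sphMeasure d).real univ
  set κ : ℝ := d / (4 * d ^ (d - 1))
  set C := max (exp 4 / V) (exp 1 / κ)
  have hC : 0 < C := lt_max_of_lt_left (div_pos (exp_pos _) (sphMeasure_real_univ_pos hd0))
  refine ⟨C, hC, fun J ω => ⟨vonMises_pos hd0 J ω, ?_⟩⟩
  have hpow : 0 ≤ ‖J‖ ^ (((d : ℝ) - 1) / 2) := by positivity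
  rcases le_or_gt ‖J‖ 2 with hJ | hJ
  · calc vonMises d J ω ≤ exp (2 * ‖J‖) / V := vonMises_le_exp_two_mul_norm hd0 J ω
      _ ≤ exp 4 / V := by gcongr; linarith
      _ ≤ C := le_max_left _ _
      _ ≤ C * (1 + ‖J‖ ^ (((d : ℝ) - 1) / 2)) := le_mul_of_one_le_right hC.le (by linarith)
  · calc vonMises d J ω ≤ exp 1 / κ * ‖J‖ ^ (((d : ℝ) - 1) / 2) :=
          vonMises_le_of_two_le_norm hd0 J ω hJ.le
      _ ≤ C * (1 + ‖J‖ ^ (((d : ℝ) - 1) / 2)) := by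
          gcongr
          · exact le_max_right _ _
          · linarith
end

section
/- The function 𝔠(r) := (∫_0^π cos θ · e^{r cos θ} sin^{d−2}θ dθ) / (∫_0^π e^{r cos θ} sin^{d−2}θ dθ) satisfies 𝔠(0) = 0 and 𝔠'(0) = 1/d. -/
open Real

/-- `𝔠(r) := (∫_0^π cos θ e^{r cos θ} sin^{d−2}θ dθ)/(∫_0^π e^{r cos θ} sin^{d−2}θ dθ)`. -/
noncomputable def cFun (d : ℕ) (r : ℝ) : ℝ :=
  (∫ θ in (0:ℝ)..π, Real.cos θ * Real.exp (r * Real.cos θ) * Real.sin θ ^ (d - 2)) /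
  (∫ θ in (0:ℝ)..π, Real.exp (r * Real.cos θ) * Real.sin θ ^ (d - 2))

/-!
Write `𝔠 = N / D` with `N(r) = ∫ sinⁿ θ cos θ e^{r cos θ}` and `D(r) = ∫ sinⁿ θ e^{r cos θ}`,
`n = d - 2`. Differentiating under the integral sign, `N(0) = D'(0) = ∫_0^π sinⁿ θ cos θ = 0`,
so `𝔠'(0) = N'(0) / D(0) = ∫ sinⁿ θ cos² θ / ∫ sinⁿ θ`, and writing `cos² = 1 - sin²` the
Wallis reduction formula `∫ sinⁿ⁺² = (n+1)/(n+2) ∫ sinⁿ` turns this ratio into `1/(n+2) = 1/d`.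
-/

open intervalIntegral

theorem hasDerivAt_integral_mul_exp_mul_cos {g : ℝ → ℝ} (hg : Continuous g) (a b r₀ : ℝ) :
    HasDerivAt (fun r => ∫ θ in a..b, g θ * exp (r * cos θ))
      (∫ θ in a..b, g θ * cos θ * exp (r₀ * cos θ)) r₀ := by
  have hbound : ∀ θ, ∀ r ∈ Metric.ball r₀ 1,
      ‖g θ * cos θ * exp (r * cos θ)‖ ≤ |g θ| * exp (|r₀| + 1) := by
    intro θ r hr
    have hr : |r| ≤ |r₀| + 1 := by
      have := abs_sub_abs_le_abs_sub r r₀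
      rw [Metric.mem_ball, Real.dist_eq] at hr
      linarith
    have hexp : exp (r * cos θ) ≤ exp (|r₀| + 1) := by
      gcongr
      calc r * cos θ ≤ |r * cos θ| := le_abs_self _
        _ = |r| * |cos θ| := abs_mul r (cos θ)
        _ ≤ |r| * 1 := by gcongr; exact abs_cos_le_one θ
        _ ≤ |r₀| + 1 := by linarith
    rw [Real.norm_eq_abs, abs_mul, abs_mul, abs_exp]
    calc |g θ| * |cos θ| * exp (r * cos θ) ≤ |g θ| * 1 * exp (|r₀| + 1) := by
          gcongr; exact abs_cos_le_one θ
      _ = |g θ| * exp (|r₀| + 1) := by rw [mul_one]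
  refine (hasDerivAt_integral_of_dominated_loc_of_deriv_le
    (F' := fun r θ => g θ * cos θ * exp (r * cos θ)) (bound := fun θ => |g θ| * exp (|r₀| + 1))
    (Metric.ball_mem_nhds r₀ one_pos) (Filter.Eventually.of_forall fun r => by fun_prop)
    (Continuous.intervalIntegrable (by fun_prop) _ _) (by fun_prop)
    (Filter.Eventually.of_forall fun θ _ => hbound θ)
    (Continuous.intervalIntegrable (by fun_prop) _ _)
    (Filter.Eventually.of_forall fun θ _ r _ => ?_)).2
  have := ((hasDerivAt_mul_const (cos θ)).exp.const_mul (g θ) : HasDerivAt _ _ r)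
  simpa only [mul_comm (exp _) (cos θ), ← mul_assoc] using this

theorem integral_sin_pow_mul_cos_eq_zero (n : ℕ) : ∫ θ in (0:ℝ)..π, sin θ ^ n * cos θ = 0 := by
  simpa using integral_sin_pow_mul_cos_pow_odd (a := 0) (b := π) n 0

theorem integral_sin_pow_mul_cos_sq (n : ℕ) :
    ∫ θ in (0:ℝ)..π, sin θ ^ n * cos θ ^ 2 = (∫ θ in (0:ℝ)..π, sin θ ^ n) / (n + 2) := by
  have hsplit : ∫ θ in (0:ℝ)..π, sin θ ^ n * cos θ ^ 2
      = (∫ θ in (0:ℝ)..π, sin θ ^ n) - ∫ θ in (0:ℝ)..π, sin θ ^ (n + 2) := by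
    rw [← integral_sub (f := fun θ => sin θ ^ n) (g := fun θ => sin θ ^ (n + 2))
      (Continuous.intervalIntegrable (by fun_prop) _ _)
      (Continuous.intervalIntegrable (by fun_prop) _ _)]
    congr with θ
    rw [cos_sq', pow_add]
    ring
  rw [hsplit, integral_sin_pow]
  field_simp
  simp only [sin_zero, sin_pi]
  ring

theorem cFun_eq_div (d : ℕ) (r : ℝ) :
    cFun d r = (∫ θ in (0:ℝ)..π, sin θ ^ (d - 2) * cos θ * exp (r * cos θ)) /
      ∫ θ in (0:ℝ)..π, sin θ ^ (d - 2) * exp (r * cos θ) := by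
  unfold cFun
  congr 1 <;> congr with θ <;> ring

/-- `𝔠(0) = 0` and `𝔠'(0) = 1/d`. -/
theorem cFun_at_zero (d : ℕ) (hd : 2 ≤ d) :
    cFun d 0 = 0 ∧ HasDerivAt (cFun d) (1 / (d : ℝ)) 0 := by
  set n := d - 2
  have hdn : (d : ℝ) = n + 2 := by norm_cast; omega
  have hN := hasDerivAt_integral_mul_exp_mul_cos (g := fun θ => sin θ ^ n * cos θ)
    (by fun_prop) 0 π 0
  have hD := hasDerivAt_integral_mul_exp_mul_cos (g := fun θ => sin θ ^ n) (by fun_prop) 0 π 0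
  have hN₀ : (∫ θ in (0:ℝ)..π, sin θ ^ n * cos θ * exp (0 * cos θ)) = 0 := by
    simpa using integral_sin_pow_mul_cos_eq_zero n
  have hD₀ : (∫ θ in (0:ℝ)..π, sin θ ^ n * exp (0 * cos θ)) = ∫ θ in (0:ℝ)..π, sin θ ^ n := by
    simp
  have hN' : (∫ θ in (0:ℝ)..π, sin θ ^ n * cos θ * cos θ * exp (0 * cos θ))
      = (∫ θ in (0:ℝ)..π, sin θ ^ n) / (n + 2) := by
    simpa only [zero_mul, exp_zero, mul_one, mul_assoc, ← sq] using integral_sin_pow_mul_cos_sq n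
  have hI := (integral_sin_pow_pos n).ne'
  refine ⟨by rw [cFun_eq_div, hN₀, zero_div], ?_⟩
  rw [show cFun d = _ from funext (cFun_eq_div d)]
  refine (hN.div hD (by rw [hD₀]; exact hI)).congr_deriv ?_
  rw [hN', hN₀, hD₀, hdn]
  field_simp
  ring
end

section
/- For all r > 0, 0 < 𝔠(r) < 1, where 𝔠(r) := (∫_0^π cos θ · e^{r cos θ} sin^{d−2}θ dθ) / (∫_0^π e^{r cos θ} sin^{d−2}θ dθ). -/
open Real

/-!
The weight `e^{r cos θ} sin^k θ` is positive on `(0, π)`, so `𝔠(r)` is a weighted mean of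
`cos θ`, which is `< 1` away from `θ = 0`. For positivity, pair `θ` with `π - θ`: the numerator
becomes `∫_0^{π/2} cos θ (e^{r cos θ} - e^{-r cos θ}) sin^k θ dθ`, whose integrand is positive
for `r > 0`.
-/

open intervalIntegral Set

theorem integral_eq_integral_half_add_reflect {f : ℝ → ℝ} (hf : Continuous f) (a : ℝ) :
    ∫ x in (0:ℝ)..a, f x = ∫ x in (0:ℝ)..a / 2, (f x + f (a - x)) := by
  have hreflect : Continuous fun x => f (a - x) := by fun_prop
  rw [integral_add (hf.intervalIntegrable _ _) (hreflect.intervalIntegrable _ _),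
    integral_comp_sub_left, sub_zero, sub_half,
    integral_add_adjacent_intervals (hf.intervalIntegrable _ _) (hf.intervalIntegrable _ _)]

theorem integral_exp_mul_cos_mul_sin_pow_pos (r : ℝ) (k : ℕ) :
    0 < ∫ θ in (0:ℝ)..π, exp (r * cos θ) * sin θ ^ k := by
  refine intervalIntegral_pos_of_pos_on (Continuous.intervalIntegrable (by fun_prop) _ _)
    (fun θ hθ => ?_) pi_pos
  have := sin_pos_of_pos_of_lt_pi hθ.1 hθ.2
  positivity

theorem integral_cos_mul_exp_mul_cos_mul_sin_pow_pos {r : ℝ} (hr : 0 < r) (k : ℕ) :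
    0 < ∫ θ in (0:ℝ)..π, cos θ * exp (r * cos θ) * sin θ ^ k := by
  rw [integral_eq_integral_half_add_reflect (by fun_prop)]
  simp only [cos_pi_sub, sin_pi_sub]
  refine intervalIntegral_pos_of_pos_on (Continuous.intervalIntegrable (by fun_prop) _ _)
    (fun θ hθ => ?_) (by positivity)
  have hcos : 0 < cos θ := cos_pos_of_mem_Ioo ⟨by linarith [hθ.1, pi_pos], hθ.2⟩
  have hsin : 0 < sin θ := sin_pos_of_pos_of_lt_pi hθ.1 (by linarith [hθ.2, pi_pos])
  have hexp : exp (r * -cos θ) < exp (r * cos θ) := exp_lt_exp.2 (by nlinarith)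
  have hodd : 0 < cos θ * (exp (r * cos θ) - exp (r * -cos θ)) :=
    mul_pos hcos (sub_pos.2 hexp)
  calc (0 : ℝ) < cos θ * (exp (r * cos θ) - exp (r * -cos θ)) * sin θ ^ k := by positivity
    _ = _ := by ring

theorem integral_cos_mul_exp_mul_cos_mul_sin_pow_lt (r : ℝ) (k : ℕ) :
    ∫ θ in (0:ℝ)..π, cos θ * exp (r * cos θ) * sin θ ^ k <
      ∫ θ in (0:ℝ)..π, exp (r * cos θ) * sin θ ^ k := by
  refine integral_lt_integral_of_continuousOn_of_le_of_exists_lt pi_pos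
    (Continuous.continuousOn (by fun_prop)) (Continuous.continuousOn (by fun_prop))
    (fun θ hθ => ?_) ⟨π / 2, ⟨by positivity, by linarith [pi_pos]⟩, by simp⟩
  have hsin : 0 ≤ sin θ := sin_nonneg_of_nonneg_of_le_pi hθ.1.le hθ.2
  rw [mul_assoc]
  exact mul_le_of_le_one_left (by positivity) (cos_le_one θ)

theorem cFun_pos_lt_one_general (d : ℕ) (r : ℝ) (hr : 0 < r) :
    0 < cFun d r ∧ cFun d r < 1 := by
  have hden := integral_exp_mul_cos_mul_sin_pow_pos r (d - 2)
  exact ⟨div_pos (integral_cos_mul_exp_mul_cos_mul_sin_pow_pos hr (d - 2)) hden,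
    (div_lt_one hden).2 (integral_cos_mul_exp_mul_cos_mul_sin_pow_lt r (d - 2))⟩

/-- For all `r > 0`, `0 < 𝔠(r) < 1`. -/
theorem cFun_pos_lt_one (d : ℕ) (hd : 2 ≤ d) (r : ℝ) (hr : 0 < r) :
    0 < cFun d r ∧ cFun d r < 1 :=
  cFun_pos_lt_one_general d r hr
end

section
/- Consider the scalar ODE dL/dt = μ 𝔠(L) − L with initial datum L(0) = L_0 ≥ 0, where 𝔠 satisfies: 𝔠(0) = 0, r ↦ 𝔠(r)/r is strictly decreasing with limit 1/d at 0 and 0 at ∞. If μ ≤ d or L_0 = 0, then L(t) → 0 as t → ∞; if μ > d and L_0 > 0, then L(t) → L_μ, the unique positive solution of L = μ 𝔠(L). -/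
/-!
Write `g x = μ 𝔠(x) − x`, so that `L' = g(L)`. For `x > 0` the sign of `g x` is the sign of
`𝔠(x)/x − 1/μ`; as `𝔠(x)/x` decreases strictly from `1/d` to `0`, `g < 0` on `(0, ∞)` when
`μ ≤ d`, while for `μ > d` it has exactly one positive zero `L_μ`, with `g > 0` on `(0, L_μ)` and
`g < 0` on `(L_μ, ∞)`. Since `g` is locally Lipschitz, trajectories cannot cross equilibria, so
`L` is monotone between consecutive equilibria, hence convergent, and its limit is a zero of `g`
(a nonzero limiting slope would make `L` unbounded). The only admissible zero is `0`, resp. `L_μ`.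
-/

open Filter Set Topology

theorem StrictAntiOn.lt_of_tendsto_nhdsGT {α β : Type*} [LinearOrder α] [TopologicalSpace α]
    [OrderTopology α] [DenselyOrdered α] [LinearOrder β] [TopologicalSpace β]
    [OrderClosedTopology β] {f : α → β} {a x : α} {l : β} (hf : StrictAntiOn f (Ioi a))
    (hl : Tendsto f (𝓝[>] a) (𝓝 l)) (hx : a < x) : f x < l := by
  obtain ⟨y, hay, hyx⟩ := exists_between hx
  have : NeBot (𝓝[>] a) := nhdsGT_neBot_of_exists_gt ⟨x, hx⟩
  refine (hf hay hx hyx).trans_le (ge_of_tendsto hl ?_)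
  filter_upwards [Ioo_mem_nhdsGT hay] with z hz
  exact (hf hz.1 hay hz.2).le

theorem MonotoneOn.exists_tendsto_atTop {f : ℝ → ℝ} {a M : ℝ} (hf : MonotoneOn f (Ici a))
    (hM : ∀ t ≥ a, f t ≤ M) : ∃ ℓ, Tendsto f atTop (𝓝 ℓ) := by
  have hmono : Monotone fun t => f (max t a) := fun s t hst =>
    hf (le_max_right s a) (le_max_right t a) (max_le_max hst le_rfl)
  refine ⟨_, (tendsto_atTop_ciSup hmono ⟨M, ?_⟩).congr' ?_⟩
  · rintro _ ⟨t, rfl⟩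
    exact hM _ (le_max_right t a)
  · filter_upwards [eventually_ge_atTop a] with t ht
    rw [max_eq_left ht]

theorem not_tendsto_nhds_of_hasDerivAt_tendsto_pos {f f' : ℝ → ℝ} {T c ℓ : ℝ}
    (hf : ∀ t ≥ T, HasDerivAt f (f' t) t) (hc : 0 < c) (hf' : Tendsto f' atTop (𝓝 c)) :
    ¬ Tendsto f atTop (𝓝 ℓ) := by
  obtain ⟨T', hT'⟩ := ((hf'.eventually_const_le (half_lt_self hc)).and
    (eventually_ge_atTop T)).exists_forall_of_atTop
  have hgrow : ∀ t ≥ T', c / 2 * (t - T') ≤ f t - f T' := fun t ht =>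
    (convex_Ici T').mul_sub_le_image_sub_of_le_deriv
      (fun s hs => (hf s (hT' s hs).2).continuousAt.continuousWithinAt)
      (fun s hs => (hf s (hT' s (interior_subset hs)).2).differentiableAt.differentiableWithinAt)
      (fun s hs => by
        rw [(hf s (hT' s (interior_subset hs)).2).deriv]
        exact (hT' s (interior_subset hs)).1)
      T' self_mem_Ici t ht ht
  have hlin : Tendsto (fun t => f T' + c / 2 * (t - T')) atTop atTop :=
    tendsto_atTop_add_const_left _ _
      ((tendsto_atTop_add_const_right _ _ tendsto_id).const_mul_atTop (half_pos hc))
  refine fun hℓ => not_tendsto_nhds_of_tendsto_atTop ?_ ℓ hℓ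
  exact tendsto_atTop_mono' _ ((eventually_ge_atTop T').mono fun t ht => by
    linarith [hgrow t ht]) hlin

theorem eq_zero_of_tendsto_of_hasDerivAt_tendsto {f f' : ℝ → ℝ} {T c ℓ : ℝ}
    (hf : ∀ t ≥ T, HasDerivAt f (f' t) t) (hfℓ : Tendsto f atTop (𝓝 ℓ))
    (hf' : Tendsto f' atTop (𝓝 c)) : c = 0 := by
  rcases lt_trichotomy c 0 with hc | hc | hc
  · exact absurd hfℓ.neg (not_tendsto_nhds_of_hasDerivAt_tendsto_pos
      (fun t ht => (hf t ht).neg) (neg_pos.2 hc) hf'.neg)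
  · exact hc
  · exact absurd hfℓ (not_tendsto_nhds_of_hasDerivAt_tendsto_pos hf hc hf')

theorem sub_pos_iff_inv_lt_div {μ r x : ℝ} (hμ : 0 < μ) (hr : 0 < r) :
    0 < μ * x - r ↔ μ⁻¹ < x / r := by
  rw [sub_pos, lt_div_iff₀ hr, inv_mul_lt_iff₀ hμ]

theorem sub_neg_iff_div_lt_inv {μ r x : ℝ} (hμ : 0 < μ) (hr : 0 < r) :
    μ * x - r < 0 ↔ x / r < μ⁻¹ := by
  rw [sub_neg, div_lt_iff₀ hr, lt_inv_mul_iff₀ hμ]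

theorem exists_pos_eq_mul_of_strictAntiOn_div {c : ℝ → ℝ} (hc : ContinuousOn c (Ioi 0))
    (hanti : StrictAntiOn (fun r => c r / r) (Ioi 0)) {A B μ : ℝ} (hμ : 0 < μ)
    (hA : Tendsto (fun r => c r / r) (𝓝[>] 0) (𝓝 A))
    (hB : Tendsto (fun r => c r / r) atTop (𝓝 B)) (hμAB : μ⁻¹ ∈ Ioo B A) :
    ∃ ρ > 0, ρ = μ * c ρ ∧ (∀ r ∈ Ioo 0 ρ, 0 < μ * c r - r) ∧ ∀ r ∈ Ioi ρ, μ * c r - r < 0 := by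
  obtain ⟨ρ, hρ, hρμ : c ρ / ρ = μ⁻¹⟩ : μ⁻¹ ∈ (fun r => c r / r) '' Ioi 0 :=
    isPreconnected_Ioi.intermediate_value_Ioo (le_principal_iff.2 (Ioi_mem_atTop 0))
      (le_principal_iff.2 self_mem_nhdsWithin) (hc.div continuousOn_id fun r hr => ne_of_gt hr)
      hB hA hμAB
  refine ⟨ρ, hρ, ?_, fun r hr => ?_, fun r hr => ?_⟩
  · rw [(div_eq_iff (ne_of_gt hρ)).1 hρμ, mul_inv_cancel_left₀ hμ.ne']
  · rw [sub_pos_iff_inv_lt_div hμ hr.1, ← hρμ]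
    exact hanti hr.1 hρ hr.2
  · have hr0 : 0 < r := lt_trans hρ hr
    rw [sub_neg_iff_div_lt_inv hμ hr0, ← hρμ]
    exact hanti hρ hr0 hr

section Autonomous

variable {g L : ℝ → ℝ} {e : ℝ}

/-- `g` is Lipschitz on the compact set `{e} ∪ L([t₀, t])`, which is enough for uniqueness against
the constant solution `e`. -/
theorem ODE_solution_eq_of_eq_equilibrium (hg : LocallyLipschitz g) (he : g e = 0) {t₀ : ℝ}
    (hode : ∀ t ≥ t₀, HasDerivAt L (g (L t)) t) (hL : L t₀ = e) : ∀ t ≥ t₀, L t = e := by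
  intro t ht
  have hcont : ContinuousOn L (Icc t₀ t) := fun s hs =>
    (hode s hs.1).continuousAt.continuousWithinAt
  obtain ⟨K, hK⟩ := hg.locallyLipschitzOn.exists_lipschitzOnWith_of_compact
    ((isCompact_Icc.image_of_continuousOn hcont).insert e)
  refine ODE_solution_unique_of_mem_Icc_right (v := fun _ => g) (fun _ _ => hK) hcont
    (fun s hs => (hode s hs.1).hasDerivWithinAt)
    (fun s hs => mem_insert_of_mem _ (mem_image_of_mem _ (Ico_subset_Icc_self hs)))
    continuousOn_const (fun s _ => by simpa [he] using hasDerivWithinAt_const s (Ici s) e)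
    (fun _ _ => mem_insert _ _) hL ⟨ht, le_rfl⟩

theorem ODE_solution_eq_of_mem_uIcc (hg : LocallyLipschitz g) (he : g e = 0)
    (hode : ∀ t ≥ 0, HasDerivAt L (g (L t)) t) {t : ℝ} (ht : 0 ≤ t)
    (hmem : e ∈ uIcc (L 0) (L t)) : L t = e := by
  obtain ⟨s, hs, hLs⟩ := intermediate_value_uIcc
    (fun s hs => (hode s (uIcc_of_le ht ▸ hs).1).continuousAt.continuousWithinAt) hmem
  rw [uIcc_of_le ht] at hs
  exact ODE_solution_eq_of_eq_equilibrium hg he (fun u hu => hode u (hs.1.trans hu)) hLs t hs.2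

theorem ODE_tendsto_equilibrium_of_monotone (hg : Continuous g)
    (hode : ∀ t ≥ 0, HasDerivAt L (g (L t)) t) (hle : ∀ t ≥ 0, L t ≤ e)
    (hnonneg : ∀ t ≥ 0, 0 ≤ g (L t)) (hne : ∀ x ∈ Ico (L 0) e, g x ≠ 0) :
    Tendsto L atTop (𝓝 e) := by
  have hmono : MonotoneOn L (Ici 0) := monotoneOn_of_hasDerivWithinAt_nonneg (convex_Ici 0)
    (fun t ht => (hode t ht).continuousAt.continuousWithinAt)
    (fun t ht => (hode t (interior_subset ht)).hasDerivWithinAt)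
    (fun t ht => hnonneg t (interior_subset ht))
  obtain ⟨ℓ, hℓ⟩ := hmono.exists_tendsto_atTop hle
  have hgℓ : g ℓ = 0 :=
    eq_zero_of_tendsto_of_hasDerivAt_tendsto hode hℓ ((hg.tendsto ℓ).comp hℓ)
  have hL0ℓ : L 0 ≤ ℓ := ge_of_tendsto hℓ <| (eventually_ge_atTop 0).mono fun t ht =>
    hmono self_mem_Ici ht ht
  have hℓe : ℓ ≤ e := le_of_tendsto hℓ <| (eventually_ge_atTop 0).mono hle
  obtain rfl : ℓ = e := by_contra fun h => hne ℓ ⟨hL0ℓ, lt_of_le_of_ne hℓe h⟩ hgℓ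
  exact hℓ

theorem ODE_tendsto_of_mem_Ioc (hg : LocallyLipschitz g) {a : ℝ} (ha : g a = 0) (he : g e = 0)
    (hode : ∀ t ≥ 0, HasDerivAt L (g (L t)) t) (h0 : L 0 ∈ Ioc a e)
    (hpos : ∀ x ∈ Ioo a e, 0 < g x) : Tendsto L atTop (𝓝 e) := by
  have hmem : ∀ t ≥ 0, L t ∈ Icc a e := fun t ht => by
    constructor <;> by_contra! h
    · exact h.ne (ODE_solution_eq_of_mem_uIcc hg ha hode ht (mem_uIcc.2 (.inr ⟨h.le, h0.1.le⟩)))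
    · exact h.ne' (ODE_solution_eq_of_mem_uIcc hg he hode ht (mem_uIcc.2 (.inl ⟨h0.2, h.le⟩)))
  refine ODE_tendsto_equilibrium_of_monotone hg.continuous hode (fun t ht => (hmem t ht).2)
    (fun t ht => ?_) (fun x hx => (hpos x ⟨h0.1.trans_le hx.1, hx.2⟩).ne')
  rcases (hmem t ht).1.eq_or_lt with h | ha'
  · rw [← h, ha]
  rcases (hmem t ht).2.eq_or_lt with h | he'
  · rw [h, he]
  exact (hpos _ ⟨ha', he'⟩).le

theorem ODE_tendsto_of_le (hg : LocallyLipschitz g) (he : g e = 0)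
    (hode : ∀ t ≥ 0, HasDerivAt L (g (L t)) t) (h0 : e ≤ L 0) (hneg : ∀ x ∈ Ioi e, g x < 0) :
    Tendsto L atTop (𝓝 e) := by
  have hge : ∀ t ≥ 0, e ≤ L t := fun t ht => by
    by_contra! h
    exact h.ne (ODE_solution_eq_of_mem_uIcc hg he hode ht (mem_uIcc.2 (.inr ⟨h.le, h0⟩)))
  -- the reflection `x ↦ -x` turns this into the monotone case
  have hode' : ∀ t ≥ 0, HasDerivAt (-L) (-g (-(-L t))) t := fun t ht => by
    simpa using (hode t ht).neg
  have hlim := ODE_tendsto_equilibrium_of_monotone (g := fun x => -g (-x)) (e := -e)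
    (hg.continuous.comp continuous_neg).neg hode' (fun t ht => neg_le_neg (hge t ht))
    (fun t ht => by
      rcases (hge t ht).eq_or_lt with h | h
      · simp [← h, he]
      · simpa using (hneg _ h).le)
    (fun x hx => by simpa using (hneg _ (lt_neg_of_lt_neg hx.2)).ne)
  simpa using hlim.neg

end Autonomous

theorem ode_flux_modulus_longtime_general (d : ℕ) (hd : 2 ≤ d) (μ : ℝ) (hμ : 0 < μ)
    (𝔠 : ℝ → ℝ) (hC1 : ContDiff ℝ 1 𝔠)
    (h0 : 𝔠 0 = 0)
    (hanti : StrictAntiOn (fun r => 𝔠 r / r) (Ioi 0))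
    (hlim0 : Tendsto (fun r => 𝔠 r / r) (nhdsWithin 0 (Ioi 0)) (nhds (1 / (d : ℝ))))
    (hliminf : Tendsto (fun r => 𝔠 r / r) atTop (nhds 0))
    (L : ℝ → ℝ) (L₀ : ℝ) (hL₀ : 0 ≤ L₀) (hinit : L 0 = L₀)
    (hode : ∀ t ≥ (0:ℝ), HasDerivAt L (μ * 𝔠 (L t) - L t) t) :
    ((μ ≤ d ∨ L₀ = 0) → Tendsto L atTop (nhds 0)) ∧
    ((d < μ ∧ 0 < L₀) →
      ∃ Lμ : ℝ, 0 < Lμ ∧ Lμ = μ * 𝔠 Lμ ∧ Tendsto L atTop (nhds Lμ)) := by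
  set g : ℝ → ℝ := fun x => μ * 𝔠 x - x
  have hg : LocallyLipschitz g := ((contDiff_const.mul hC1).sub contDiff_id).locallyLipschitz
  have hg0 : g 0 = 0 := by simp [g, h0]
  rw [one_div] at hlim0
  constructor
  · rintro (hμd | rfl)
    · exact ODE_tendsto_of_le hg hg0 hode (hinit ▸ hL₀) fun r hr =>
        (sub_neg_iff_div_lt_inv hμ hr).2
          ((hanti.lt_of_tendsto_nhdsGT hlim0 hr).trans_le (inv_anti₀ hμ hμd))
    · exact tendsto_const_nhds.congr' <| (eventually_ge_atTop 0).mono fun t ht =>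
        (ODE_solution_eq_of_eq_equilibrium hg hg0 hode hinit t ht).symm
  · rintro ⟨hdμ, hL₀pos⟩
    obtain ⟨Lμ, hLμ, hfix, hpos, hneg⟩ := exists_pos_eq_mul_of_strictAntiOn_div
      hC1.continuous.continuousOn hanti hμ hlim0 hliminf
      ⟨inv_pos.2 hμ, inv_strictAnti₀ (Nat.cast_pos.2 (by omega)) hdμ⟩
    have hgLμ : g Lμ = 0 := sub_eq_zero.2 hfix.symm
    refine ⟨Lμ, hLμ, hfix, ?_⟩
    rcases le_total L₀ Lμ with hle | hge
    · exact ODE_tendsto_of_mem_Ioc hg hg0 hgLμ hode (hinit ▸ ⟨hL₀pos, hle⟩) hpos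
    · exact ODE_tendsto_of_le hg hgLμ hode (hinit ▸ hge) hneg

/-- Long-time behaviour of the scalar ODE `L' = μ 𝔠(L) − L`, `L(0) = L₀ ≥ 0`:
if `μ ≤ d` or `L₀ = 0` then `L(t) → 0`, while if `μ > d` and `L₀ > 0` then
`L(t) → L_μ`, the unique positive solution of `L = μ 𝔠(L)`. -/
theorem ode_flux_modulus_longtime (d : ℕ) (hd : 2 ≤ d) (μ : ℝ) (hμ : 0 < μ)
    (𝔠 : ℝ → ℝ) (hC1 : ContDiff ℝ 1 𝔠)
    (hrange : ∀ r ∈ Ici (0:ℝ), 0 ≤ 𝔠 r ∧ 𝔠 r < 1)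
    (h0 : 𝔠 0 = 0)
    (hanti : StrictAntiOn (fun r => 𝔠 r / r) (Ioi 0))
    (hlim0 : Tendsto (fun r => 𝔠 r / r) (nhdsWithin 0 (Ioi 0)) (nhds (1 / (d : ℝ))))
    (hliminf : Tendsto (fun r => 𝔠 r / r) atTop (nhds 0))
    (L : ℝ → ℝ) (L₀ : ℝ) (hL₀ : 0 ≤ L₀) (hinit : L 0 = L₀)
    (hode : ∀ t ≥ (0:ℝ), HasDerivAt L (μ * 𝔠 (L t) - L t) t) :
    ((μ ≤ d ∨ L₀ = 0) → Tendsto L atTop (nhds 0)) ∧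
    ((d < μ ∧ 0 < L₀) →
      ∃ Lμ : ℝ, 0 < Lμ ∧ Lμ = μ * 𝔠 Lμ ∧ Tendsto L atTop (nhds Lμ)) :=
  ode_flux_modulus_longtime_general d hd μ hμ 𝔠 hC1 h0 hanti hlim0 hliminf L L₀ hL₀ hinit hode
end

section
/- Let k ∈ ℝ^d with |k| ≥ γ > 0, let z = x + iy with x ≥ 0, and define c_1(z,k) := ∫_{S^{d-1}} ω_1 M_0(ω) / (1 + z + i|k|ω_1) dω, where M_0 is the uniform density. Then |c_1| ≤ 1/(2√d) + 1/|k|. -/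
/-!
The reflection `ω₁ ↦ -ω₁` preserves the surface measure, so `c₁` is half the integral of
`ω₁/A - ω₁/B` with `A, B = 1 + z ± i|k|ω₁`. This equals `-2i|k|ω₁²/(AB)`, and since
`|A|, |B| ≥ Re (1 + z) ≥ 1` and `|A| + |B| ≥ |A - B| = 2|k||ω₁|`, its modulus is at most
`|ω₁| + 2/|k|`. Integrating against `M₀`, the term `|ω₁|` contributes at most `1/√d`: by AM–GM
`|ω₁| ≤ (√d/2) ω₁² + 1/(2√d)`, and `∫ ω₁² M₀ = 1/d` because coordinate permutations preserve the
measure and `∑ ωᵢ² = 1`.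
-/

open MeasureTheory Metric

/-- The uniform probability density `M_0 = |S^{d-1}|⁻¹` on the sphere. -/
noncomputable def uniformDensity (d : ℕ) : ℝ :=
  ((sphMeasure d) Set.univ).toReal⁻¹

open Set
open scoped Pointwise

lemma two_mul_sq_le_of_one_le_of_two_mul_le_add {c p q : ℝ} (hc : 0 ≤ c) (hp : 1 ≤ p) (hq : 1 ≤ q)
    (hpq : 2 * c ≤ p + q) : 2 * c ^ 2 ≤ (c + 2) * (p * q) := by
  have h1 : p + q - 1 ≤ p * q := by nlinarith
  have h2 : 1 ≤ p * q := by nlinarith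
  rcases le_total c 1 with h | h <;> nlinarith

lemma norm_div_add_I_mul_sub_div_sub_I_mul_le {w : ℂ} (hw : 1 ≤ w.re) {a : ℝ} (ha : 0 < a) (t : ℝ) :
    ‖t / (w + Complex.I * (a * t)) - t / (w - Complex.I * (a * t))‖ ≤ |t| + 2 / a := by
  set A := w + Complex.I * (a * t)
  set B := w - Complex.I * (a * t)
  have hA : 1 ≤ ‖A‖ := hw.trans <| by simpa [A] using Complex.re_le_norm A
  have hB : 1 ≤ ‖B‖ := hw.trans <| by simpa [B] using Complex.re_le_norm B
  have hA0 : A ≠ 0 := norm_pos_iff.1 (one_pos.trans_le hA)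
  have hB0 : B ≠ 0 := norm_pos_iff.1 (one_pos.trans_le hB)
  have hdiff : ‖A - B‖ = 2 * (a * |t|) := by
    simp [A, B, ← two_mul, abs_of_pos ha]
  have hsplit : (t : ℂ) / A - t / B = -t * (A - B) / (A * B) := by
    field_simp; ring
  have key := two_mul_sq_le_of_one_le_of_two_mul_le_add (by positivity) hA hB
    (hdiff ▸ norm_sub_le A B)
  rw [hsplit, norm_div, norm_mul, norm_mul, hdiff, norm_neg, Complex.norm_real, Real.norm_eq_abs,
    div_le_iff₀ (by positivity)]
  rw [mul_pow, sq_abs] at key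
  field_simp
  nlinarith [sq_abs t]

theorem integral_abs_le_mul_integral_sq_add {α : Type*} [MeasurableSpace α] {ν : Measure α}
    [IsFiniteMeasure ν] {f : α → ℝ} (hf : Integrable (fun x => f x ^ 2) ν) {s : ℝ} (hs : 0 < s) :
    ∫ x, |f x| ∂ν ≤ s / 2 * ∫ x, f x ^ 2 ∂ν + ν.real univ / (2 * s) := by
  have amgm (t : ℝ) : |t| ≤ s / 2 * t ^ 2 + 1 / (2 * s) := by
    rw [← sq_abs t, ← sub_nonneg]
    have : s / 2 * |t| ^ 2 + 1 / (2 * s) - |t| = (s * |t| - 1) ^ 2 / (2 * s) := by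
      field_simp; ring
    rw [this]; positivity
  calc ∫ x, |f x| ∂ν ≤ ∫ x, (s / 2 * f x ^ 2 + 1 / (2 * s)) ∂ν :=
        integral_mono_of_nonneg (.of_forall fun x => abs_nonneg _)
          ((hf.const_mul _).add (integrable_const _)) (.of_forall fun x => amgm (f x))
    _ = s / 2 * ∫ x, f x ^ 2 ∂ν + ν.real univ / (2 * s) := by
        rw [integral_add (hf.const_mul _) (integrable_const _), integral_const_mul,
          integral_const, smul_eq_mul]
        ring

namespace LinearIsometryEquiv

section NormedSpace

variable {E : Type*} [NormedAddCommGroup E] [NormedSpace ℝ E] [MeasurableSpace E] [BorelSpace E]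

def unitSphereEquiv (e : E ≃ₗᵢ[ℝ] E) : sphere (0 : E) 1 ≃ᵐ sphere (0 : E) 1 :=
  (e.toHomeomorph.subtype fun x => by simp).toMeasurableEquiv

@[simp]
lemma coe_unitSphereEquiv_apply (e : E ≃ₗᵢ[ℝ] E) (ω : sphere (0 : E) 1) :
    (e.unitSphereEquiv ω : E) = e ω :=
  rfl

lemma image_coe_preimage_unitSphereEquiv (e : E ≃ₗᵢ[ℝ] E) (s : Set (sphere (0 : E) 1)) :
    ((↑) '' (e.unitSphereEquiv ⁻¹' s) : Set E) = e ⁻¹' ((↑) '' s) := by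
  ext x
  constructor
  · rintro ⟨ω, hω, rfl⟩
    exact ⟨_, hω, rfl⟩
  · rintro ⟨ω, hω, hx⟩
    have hx' : x ∈ sphere (0 : E) 1 := by
      rw [mem_sphere_zero_iff_norm, ← e.norm_map, ← hx]
      exact norm_eq_of_mem_sphere ω
    have hω' : e.unitSphereEquiv ⟨x, hx'⟩ = ω := Subtype.ext hx.symm
    exact ⟨⟨x, hx'⟩, by rwa [mem_preimage, hω'], rfl⟩

theorem measurePreserving_unitSphereEquiv {μ : Measure E} (e : E ≃ₗᵢ[ℝ] E)
    (he : MeasurePreserving e μ μ) :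
    MeasurePreserving e.unitSphereEquiv μ.toSphere μ.toSphere := by
  refine ⟨e.unitSphereEquiv.measurable, Measure.ext fun s hs => ?_⟩
  rw [Measure.map_apply e.unitSphereEquiv.measurable hs,
    μ.toSphere_apply' (e.unitSphereEquiv.measurable hs), μ.toSphere_apply' hs,
    image_coe_preimage_unitSphereEquiv]
  congr 1
  have hsmul : Ioo (0 : ℝ) 1 • (e ⁻¹' ((↑) '' s)) = e ⁻¹' (Ioo (0 : ℝ) 1 • ((↑) '' s)) := by
    rw [← e.symm_symm, ← image_eq_preimage_symm, ← image_eq_preimage_symm, ← image2_smul,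
      ← image2_smul, image_image2_distrib_right fun r x => e.symm.map_smul r x]
  rw [hsmul, he.measure_preimage_emb e.toHomeomorph.measurableEmbedding]

end NormedSpace

variable {E : Type*} [NormedAddCommGroup E] [InnerProductSpace ℝ E] [FiniteDimensional ℝ E]
  [MeasurableSpace E] [BorelSpace E] {F : Type*} [NormedAddCommGroup F] [NormedSpace ℝ F]

theorem integral_comp_unitSphereEquiv (e : E ≃ₗᵢ[ℝ] E) (f : sphere (0 : E) 1 → F) :
    ∫ ω, f (e.unitSphereEquiv ω) ∂(volume : Measure E).toSphere =
      ∫ ω, f ω ∂(volume : Measure E).toSphere :=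
  (e.measurePreserving_unitSphereEquiv e.measurePreserving).integral_comp' f

end LinearIsometryEquiv

namespace EuclideanSpace

variable {ι : Type*} [Fintype ι] {F : Type*} [NormedAddCommGroup F]

theorem integral_comp_coord_eq [NormedSpace ℝ F] (f : ℝ → F) (i j : ι) :
    ∫ ω : sphere (0 : EuclideanSpace ℝ ι) 1, f ((ω : EuclideanSpace ℝ ι) i)
        ∂(volume : Measure (EuclideanSpace ℝ ι)).toSphere =
      ∫ ω : sphere (0 : EuclideanSpace ℝ ι) 1, f ((ω : EuclideanSpace ℝ ι) j)
        ∂(volume : Measure (EuclideanSpace ℝ ι)).toSphere := by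
  classical
  rw [← (LinearIsometryEquiv.piLpCongrLeft 2 ℝ ℝ (Equiv.swap i j)).integral_comp_unitSphereEquiv]
  congr 1
  ext ω
  simp only [LinearIsometryEquiv.coe_unitSphereEquiv_apply,
    LinearIsometryEquiv.piLpCongrLeft_apply, Equiv.piCongrLeft', Equiv.symm_swap, Equiv.coe_fn_mk,
    Equiv.swap_apply_left]

theorem integral_comp_neg_coord [NormedSpace ℝ F] (f : ℝ → F) (i : ι) :
    ∫ ω : sphere (0 : EuclideanSpace ℝ ι) 1, f (-(ω : EuclideanSpace ℝ ι) i)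
        ∂(volume : Measure (EuclideanSpace ℝ ι)).toSphere =
      ∫ ω : sphere (0 : EuclideanSpace ℝ ι) 1, f ((ω : EuclideanSpace ℝ ι) i)
        ∂(volume : Measure (EuclideanSpace ℝ ι)).toSphere := by
  classical
  let reflect : EuclideanSpace ℝ ι ≃ₗᵢ[ℝ] EuclideanSpace ℝ ι := LinearIsometryEquiv.piLpCongrRight 2
    (Function.update (fun _ => LinearIsometryEquiv.refl ℝ ℝ) i (LinearIsometryEquiv.neg ℝ))
  rw [← reflect.integral_comp_unitSphereEquiv]
  congr 1
  ext ω
  simp only [reflect, LinearIsometryEquiv.coe_unitSphereEquiv_apply,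
    LinearIsometryEquiv.piLpCongrRight_apply, Function.update_self, LinearIsometryEquiv.coe_neg,
    neg_neg]

theorem integrable_comp_coord {g : ℝ → F} (hg : Continuous g) (i : ι) :
    Integrable (fun ω : sphere (0 : EuclideanSpace ℝ ι) 1 => g ((ω : EuclideanSpace ℝ ι) i))
      (volume : Measure (EuclideanSpace ℝ ι)).toSphere :=
  Continuous.integrable_of_hasCompactSupport (by fun_prop) (.of_compactSpace _)

theorem integral_sq_coord (i : ι) :
    ∫ ω : sphere (0 : EuclideanSpace ℝ ι) 1, (ω : EuclideanSpace ℝ ι) i ^ 2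
        ∂(volume : Measure (EuclideanSpace ℝ ι)).toSphere =
      (volume : Measure (EuclideanSpace ℝ ι)).toSphere.real univ / Fintype.card ι := by
  have hsum : ∑ j : ι, ∫ ω : sphere (0 : EuclideanSpace ℝ ι) 1, (ω : EuclideanSpace ℝ ι) j ^ 2
      ∂(volume : Measure (EuclideanSpace ℝ ι)).toSphere =
        (volume : Measure (EuclideanSpace ℝ ι)).toSphere.real univ := by
    rw [← integral_finsetSum _ fun j _ => integrable_comp_coord (continuous_pow 2) j]
    simp [← EuclideanSpace.real_norm_sq_eq]
  simp only [integral_comp_coord_eq (· ^ 2) _ i, Finset.sum_const, Finset.card_univ,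
    nsmul_eq_mul] at hsum
  have : (0 : ℝ) < Fintype.card ι := Nat.cast_pos.2 (Fintype.card_pos_iff.2 ⟨i⟩)
  rw [eq_div_iff this.ne', ← hsum, mul_comm]

theorem integral_abs_coord_le (i : ι) :
    ∫ ω : sphere (0 : EuclideanSpace ℝ ι) 1, |(ω : EuclideanSpace ℝ ι) i|
        ∂(volume : Measure (EuclideanSpace ℝ ι)).toSphere ≤
      (volume : Measure (EuclideanSpace ℝ ι)).toSphere.real univ / √(Fintype.card ι) := by
  have hn : (0 : ℝ) < Fintype.card ι := Nat.cast_pos.2 (Fintype.card_pos_iff.2 ⟨i⟩)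
  refine (integral_abs_le_mul_integral_sq_add (integrable_comp_coord (continuous_pow 2) i)
    (Real.sqrt_pos.2 hn)).trans_eq ?_
  rw [integral_sq_coord]
  have := Real.sq_sqrt hn.le
  field_simp
  linear_combination (volume : Measure (EuclideanSpace ℝ ι)).toSphere.real univ * this

theorem norm_integral_coord_div_le {w : ℂ} (hw : 1 ≤ w.re) {a : ℝ} (ha : 0 < a) (i : ι) :
    ‖∫ ω : sphere (0 : EuclideanSpace ℝ ι) 1,
        ((ω : EuclideanSpace ℝ ι) i : ℂ) / (w + Complex.I * (a * (ω : EuclideanSpace ℝ ι) i))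
        ∂(volume : Measure (EuclideanSpace ℝ ι)).toSphere‖ ≤
      (volume : Measure (EuclideanSpace ℝ ι)).toSphere.real univ *
        (1 / (2 * √(Fintype.card ι)) + 1 / a) := by
  set σ := (volume : Measure (EuclideanSpace ℝ ι)).toSphere
  set φ : ℝ → ℂ := fun t => t / (w + Complex.I * (a * t))
  have hφ : Continuous φ := by
    refine Continuous.div (by fun_prop) (by fun_prop) fun t h => ?_
    have hre : (w + Complex.I * (a * t)).re = w.re := by simp
    rw [h, Complex.zero_re] at hre
    linarith
  have hsym : 2 * ∫ ω, φ ((ω : EuclideanSpace ℝ ι) i) ∂σ =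
      ∫ ω, (φ ((ω : EuclideanSpace ℝ ι) i) + φ (-(ω : EuclideanSpace ℝ ι) i)) ∂σ := by
    rw [integral_add (integrable_comp_coord hφ i)
      (integrable_comp_coord (g := fun t => φ (-t)) (hφ.comp continuous_neg) i),
      integral_comp_neg_coord, two_mul]
  have heven (t : ℝ) : ‖φ t + φ (-t)‖ ≤ |t| + 2 / a := by
    convert norm_div_add_I_mul_sub_div_sub_I_mul_le hw ha t using 2
    simp only [φ]
    push_cast
    ring
  have habs := integrable_comp_coord continuous_abs i
  have hn : 0 < √(Fintype.card ι) :=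
    Real.sqrt_pos.2 (Nat.cast_pos.2 (Fintype.card_pos_iff.2 ⟨i⟩))
  calc ‖∫ ω, φ ((ω : EuclideanSpace ℝ ι) i) ∂σ‖
      = ‖∫ ω, (φ ((ω : EuclideanSpace ℝ ι) i) + φ (-(ω : EuclideanSpace ℝ ι) i)) ∂σ‖ / 2 := by
        rw [← hsym, norm_mul, Complex.norm_two]
        ring
    _ ≤ (∫ ω, (|(ω : EuclideanSpace ℝ ι) i| + 2 / a) ∂σ) / 2 := by
        gcongr
        exact norm_integral_le_of_norm_le (habs.add (integrable_const _))
          (.of_forall fun ω => heven ((ω : EuclideanSpace ℝ ι) i))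
    _ = (∫ ω, |(ω : EuclideanSpace ℝ ι) i| ∂σ + σ.real univ * (2 / a)) / 2 := by
        rw [integral_add habs (integrable_const _), integral_const, smul_eq_mul]
    _ ≤ (σ.real univ / √(Fintype.card ι) + σ.real univ * (2 / a)) / 2 := by
        gcongr
        exact integral_abs_coord_le i
    _ = σ.real univ * (1 / (2 * √(Fintype.card ι)) + 1 / a) := by
        field_simp

end EuclideanSpace

/-- Estimate of `c₁(z,k) = ∫ ω₁ M₀/(1+z+i|k|ω₁) dω`: for `Re z ≥ 0` and `|k| > 0`,
`|c₁| ≤ 1/(2√d) + 1/|k|`. -/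
theorem c1_estimate (d : ℕ) (hd : 2 ≤ d) (z : ℂ) (hz : 0 ≤ z.re)
    (k : EuclideanSpace ℝ (Fin d)) (hk : 0 < ‖k‖) :
    ‖(∫ ω : sphere (0 : EuclideanSpace ℝ (Fin d)) 1,
          (((ω : EuclideanSpace ℝ (Fin d)) ⟨0, by omega⟩ * uniformDensity d : ℝ) : ℂ) /
            (1 + z + Complex.I * (‖k‖ * (ω : EuclideanSpace ℝ (Fin d)) ⟨0, by omega⟩))
          ∂(sphMeasure d))‖ ≤
      1 / (2 * Real.sqrt d) + 1 / ‖k‖ := by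
  set M := uniformDensity d
  have hM : 0 ≤ M := inv_nonneg.2 ENNReal.toReal_nonneg
  have hMV : M * (sphMeasure d).real univ ≤ 1 := inv_mul_le_one_of_le₀ le_rfl measureReal_nonneg
  have hw : 1 ≤ (1 + z).re := by simpa using hz
  have key := EuclideanSpace.norm_integral_coord_div_le hw hk (⟨0, by omega⟩ : Fin d)
  rw [Fintype.card_fin] at key
  simp_rw [Complex.ofReal_mul, mul_comm _ (M : ℂ), mul_div_assoc]
  rw [integral_const_mul, norm_mul, Complex.norm_real, Real.norm_of_nonneg hM]
  calc M * _ ≤ M * ((sphMeasure d).real univ * (1 / (2 * √d) + 1 / ‖k‖)) :=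
        mul_le_mul_of_nonneg_left key hM
    _ ≤ 1 / (2 * √d) + 1 / ‖k‖ := by
        rw [← mul_assoc]
        exact mul_le_of_le_one_left (by positivity) hMV
end
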